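/- arXiv:2205.04694 — 3 statements merged into one kernel-verified Lean document; each statement's English description precedes it below -/
import Mathlib

section
/- Let (X,d) be a pre-circular Robinson space with compatible circular order β, and let x ⋖ y ⋖ z be three points with d(x,z) < max{d(x,y), d(y,z)}. Then the arc from z to x (i.e., the set {t : β(z,t,x)} ∪ {z,x}) with the linear order induced by β is a Robinson space. -/
/-- A circular order on `X`: a ternary relation satisfying Huntington's axioms
(CO1)-(CO4), holding only for triples of distinct points. -/
structure CircOrder (X : Type*) where
  btw : X → X → X → Prop
  distinct : ∀ {u v w}, btw u v w → u ≠ v ∧ v ≠ w ∧ u ≠ w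
  total : ∀ {u v w : X}, u ≠ v → v ≠ w → u ≠ w → btw u v w ∨ btw w v u
  asymm : ∀ {u v w}, btw u v w → ¬ btw w v u
  cyclic : ∀ {u v w}, btw u v w → btw v w u
  btw_trans : ∀ {u v w x}, btw u v w → btw u w x → btw u v x

/-- `x₀ ⋖ x₁ ⋖ ... ⋖ x_{n-1}`: the sequence contains at least three distinct
points and `β (x i) (x j) (x k)` holds for all `i < j < k` with distinct values. -/
def CircOrder.Chain {X : Type*} (C : CircOrder X) {n : ℕ} (x : Fin n → X) : Prop :=
  (∃ i j k : Fin n, x i ≠ x j ∧ x j ≠ x k ∧ x i ≠ x k) ∧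
  ∀ i j k : Fin n, i < j → j < k →
    x i ≠ x j → x j ≠ x k → x i ≠ x k → C.btw (x i) (x j) (x k)

/-- The arc from `a` to `b` (in the direction of the circular order). -/
def CircOrder.arc {X : Type*} (C : CircOrder X) (a b : X) : Set X :=
  {t | C.btw a t b} ∪ {a, b}

/-- `A` is an arc of the circular order: a nonempty proper subset with no four
distinct points `u, v ∈ A`, `s, t ∉ A` arranged cyclically as `u ⋖ s ⋖ v ⋖ t`. -/
def CircOrder.IsArc {X : Type*} (C : CircOrder X) (A : Set X) : Prop :=
  A.Nonempty ∧ A ≠ Set.univ ∧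
    ¬ ∃ u v s t : X, u ∈ A ∧ v ∈ A ∧ s ∉ A ∧ t ∉ A ∧ u ≠ v ∧ s ≠ t ∧
      C.Chain ![u, s, v, t]

/-- `d` is a dissimilarity on `X`. -/
def Dissim {X : Type*} (d : X → X → ℝ) : Prop :=
  (∀ x y, d x y = d y x) ∧ (∀ x y, 0 ≤ d x y) ∧ (∀ x y, d x y = 0 ↔ x = y)

/-- The set of farthest neighbors of `x`. -/
def Fset {X : Type*} (d : X → X → ℝ) (x : X) : Set X :=
  {y | ∀ z, d x z ≤ d x y}

/-- `β` is compatible in the pre-circular Robinson sense: every quadruple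
`x ⋖ y ⋖ z ⋖ t` satisfies `cR(x,y,z,t)`. -/
def preCompat {X : Type*} (C : CircOrder X) (d : X → X → ℝ) : Prop :=
  ∀ x y z t : X, C.Chain ![x, y, z, t] →
    min (max (d x y) (d y z)) (max (d x t) (d t z)) ≤ d x z

/-- `β` is compatible in the strictly pre-circular (= strictly circular)
Robinson sense: every quadruple of distinct points `x ⋖ y ⋖ z ⋖ t`
satisfies `scR(x,y,z,t)`. -/
def spreCompat {X : Type*} (C : CircOrder X) (d : X → X → ℝ) : Prop :=
  ∀ x y z t : X, List.Pairwise (· ≠ ·) [x, y, z, t] → C.Chain ![x, y, z, t] →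
    min (max (d x y) (d y z)) (max (d x t) (d t z)) < d x z

/-- `β` is compatible in the quasi-circular Robinson sense: every quadruple
`x ⋖ y ⋖ z ⋖ t` satisfies `qcR(x,y,z,t)`. -/
def qcCompat {X : Type*} (C : CircOrder X) (d : X → X → ℝ) : Prop :=
  ∀ x y z t : X, C.Chain ![x, y, z, t] → min (d y z) (d t z) ≤ d x z

/-- `β` is compatible in the strictly quasi-circular Robinson sense: every
quadruple of distinct points `x ⋖ y ⋖ z ⋖ t` satisfies `sqcR(x,y,z,t)`. -/
def sqcCompat {X : Type*} (C : CircOrder X) (d : X → X → ℝ) : Prop :=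
  ∀ x y z t : X, List.Pairwise (· ≠ ·) [x, y, z, t] → C.Chain ![x, y, z, t] →
    min (d y z) (d t z) < d x z

/-- The arc from `a` to `b`, with the linear order induced by the circular
order, is a Robinson space: any `u, v, w` arranged as `a ⋖ u ⋖ v ⋖ w ⋖ b`
satisfy the Robinson inequality. -/
def RobinsonOnArc {X : Type*} (C : CircOrder X) (d : X → X → ℝ) (a b : X) : Prop :=
  ∀ u v w : X, C.Chain ![a, u, v, w, b] → max (d u v) (d v w) ≤ d u w

/-- The left arc `L_x = {t ∈ M_x : x ⋖ t ⋖ F_x}`. -/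
def Lset {X : Type*} (C : CircOrder X) (d : X → X → ℝ) (x : X) : Set X :=
  {t | t ≠ x ∧ t ∉ Fset d x ∧ ∀ s ∈ Fset d x, C.btw x t s}

/-- The right arc `R_x = {t ∈ M_x : F_x ⋖ t ⋖ x}`. -/
def Rset {X : Type*} (C : CircOrder X) (d : X → X → ℝ) (x : X) : Set X :=
  {t | t ≠ x ∧ t ∉ Fset d x ∧ ∀ s ∈ Fset d x, C.btw s t x}

section Aux
variable {X : Type*}

lemma CircOrder.cyc2 (C : CircOrder X) {a b c : X} (h : C.btw a b c) : C.btw c a b :=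
  C.cyclic (C.cyclic h)

lemma CircOrder.no_both (C : CircOrder X) {a b c : X} (h1 : C.btw a b c) (h2 : C.btw a c b) :
    False := C.asymm h1 (C.cyclic h2)

lemma CircOrder.no_flip (C : CircOrder X) {a b c : X} (h1 : C.btw a b c) (h2 : C.btw b a c) :
    False := C.no_both h1 (C.cyclic h2)

lemma CircOrder.mkChain4' (C : CircOrder X) {a b c d : X}
    (hex : ∃ i j k : Fin 4, ![a,b,c,d] i ≠ ![a,b,c,d] j ∧ ![a,b,c,d] j ≠ ![a,b,c,d] k ∧
      ![a,b,c,d] i ≠ ![a,b,c,d] k)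
    (h1 : a ≠ b → b ≠ c → a ≠ c → C.btw a b c)
    (h2 : a ≠ b → b ≠ d → a ≠ d → C.btw a b d)
    (h3 : a ≠ c → c ≠ d → a ≠ d → C.btw a c d)
    (h4 : b ≠ c → c ≠ d → b ≠ d → C.btw b c d) :
    C.Chain ![a, b, c, d] := by
  refine ⟨hex, ?_⟩
  intro i j k hij hjk n1 n2 n3
  fin_cases i <;> fin_cases j <;> fin_cases k <;>
    first
      | exact absurd hij (by decide)
      | exact absurd hjk (by decide)
      | exact h1 n1 n2 n3
      | exact h2 n1 n2 n3
      | exact h3 n1 n2 n3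
      | exact h4 n1 n2 n3

lemma CircOrder.mkChain4 (C : CircOrder X) {a b c d : X}
    (h1 : C.btw a b c) (h2 : C.btw a b d) (h3 : C.btw a c d) (h4 : C.btw b c d) :
    C.Chain ![a, b, c, d] := by
  obtain ⟨hab, hbc, hac⟩ := C.distinct h1
  exact C.mkChain4' ⟨0, 1, 2, hab, hbc, hac⟩ (fun _ _ _ => h1) (fun _ _ _ => h2)
    (fun _ _ _ => h3) (fun _ _ _ => h4)

@[reducible] def CircOrder.rev (C : CircOrder X) : CircOrder X where
  btw a b c := C.btw c b a
  distinct h := ⟨(C.distinct h).2.1.symm, (C.distinct h).1.symm, (C.distinct h).2.2.symm⟩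
  total huv hvw huw := C.total hvw.symm huv.symm huw.symm
  asymm h := C.asymm h
  cyclic h := C.cyc2 h
  btw_trans := by
    intro u v w x h1 h2
    have h1' : C.btw w v u := h1
    have h2' : C.btw x w u := h2
    have a1 : C.btw u x w := C.cyc2 h2'
    have a2 : C.btw u w v := C.cyc2 h1'
    have a3 : C.btw u x v := C.btw_trans a1 a2
    exact C.cyclic a3

lemma CircOrder.Chain.rev' {C : CircOrder X} {n : ℕ} {p : Fin n → X} (h : C.Chain p) :
    C.rev.Chain (fun i => p i.rev) := by
  obtain ⟨⟨i, j, k, n1, n2, n3⟩, h2⟩ := h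
  refine ⟨⟨i.rev, j.rev, k.rev, by simpa [Fin.rev_rev] using n1,
    by simpa [Fin.rev_rev] using n2, by simpa [Fin.rev_rev] using n3⟩, ?_⟩
  intro i j k hij hjk m1 m2 m3
  have hres : C.btw (p k.rev) (p j.rev) (p i.rev) :=
    h2 k.rev j.rev i.rev (Fin.rev_lt_rev.mpr hjk) (Fin.rev_lt_rev.mpr hij)
      m2.symm m1.symm m3.symm
  exact hres

lemma CircOrder.chain4_rot (C : CircOrder X) {a b c d : X} (h : C.Chain ![a,b,c,d]) :
    C.Chain ![b, c, d, a] := by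
  obtain ⟨⟨i, j, k, n1, n2, n3⟩, h2⟩ := h
  have hval : ∀ i : Fin 4, ∃ i' : Fin 4, (![b,c,d,a] : Fin 4 → X) i' = ![a,b,c,d] i := by
    intro i
    fin_cases i
    exacts [⟨3, rfl⟩, ⟨0, rfl⟩, ⟨1, rfl⟩, ⟨2, rfl⟩]
  refine C.mkChain4' ?_ ?_ ?_ ?_ ?_
  · obtain ⟨i', hi⟩ := hval i
    obtain ⟨j', hj⟩ := hval j
    obtain ⟨k', hk⟩ := hval k
    exact ⟨i', j', k', by rw [hi, hj]; exact n1, by rw [hj, hk]; exact n2,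
      by rw [hi, hk]; exact n3⟩
  · intro p q r; exact h2 1 2 3 (by decide) (by decide) p q r
  · intro p q r
    have hb : C.btw a b c := h2 0 1 2 (by decide) (by decide) r.symm p q.symm
    exact C.cyclic hb
  · intro p q r
    have hb : C.btw a b d := h2 0 1 3 (by decide) (by decide) r.symm p q.symm
    exact C.cyclic hb
  · intro p q r
    have hb : C.btw a c d := h2 0 2 3 (by decide) (by decide) r.symm p q.symm
    exact C.cyclic hb

lemma preCompat_rev {C : CircOrder X} {d : X → X → ℝ} (hsym : ∀ a b, d a b = d b a)
    (hc : preCompat C d) : preCompat C.rev d := by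
  intro x' y' z' t' hch'
  have h1 : C.rev.rev.Chain ![t', z', y', x'] := by
    have h0 := hch'.rev'
    have hfe : (fun i : Fin 4 => (![x',y',z',t'] : Fin 4 → X) i.rev) = ![t',z',y',x'] := by
      funext i; fin_cases i <;> rfl
    rwa [hfe] at h0
  have h2 : C.Chain ![t', z', y', x'] := h1
  have h3 : C.Chain ![z', y', x', t'] := C.chain4_rot h2
  have h4 := hc z' y' x' t' h3
  have e1 : max (d x' y') (d y' z') = max (d z' y') (d y' x') := by
    rw [hsym x' y', hsym y' z', max_comm]
  have e2 : max (d x' t') (d t' z') = max (d z' t') (d t' x') := by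
    rw [hsym x' t', hsym t' z', max_comm]
  rw [e1, e2, hsym x' z']
  exact h4

set_option maxHeartbeats 2000000 in
lemma arc_aux (d : X → X → ℝ) (hd : Dissim d) (C : CircOrder X)
    (hc : preCompat C d) (x y z : X) (bxyz : C.btw x y z) (hlt : d x z < d x y) :
    RobinsonOnArc C d z x := by
  obtain ⟨dsym, dnn, dzero⟩ := hd
  obtain ⟨hxy, hyz, hxz⟩ := C.distinct bxyz
  have byzx := C.cyclic bxyz
  have bzxy := C.cyclic byzx
  intro u v w hch5
  by_cases huv : u = v
  · subst huv
    have h0 : d u u = 0 := (dzero u u).mpr rfl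
    rw [h0]
    exact max_le (dnn u w) le_rfl
  by_cases hvw : v = w
  · subst hvw
    have h0 : d v v = 0 := (dzero v v).mpr rfl
    rw [h0]
    exact max_le le_rfl (dnn u v)
  by_cases huw : u = w
  · exfalso
    subst huw
    rcases eq_or_ne z u with hzu | hzu
    · subst hzu
      rcases eq_or_ne x v with hxv | hxv
      · subst hxv
        obtain ⟨i, j, k, n1, n2, n3⟩ := hch5.1
        fin_cases i <;> fin_cases j <;> fin_cases k <;> simp_all
      · have b1 : C.btw z v x := hch5.2 1 2 4 (by decide) (by decide) huv
          (Ne.symm hxv) (Ne.symm hxz)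
        have b2 : C.btw v z x := hch5.2 2 3 4 (by decide) (by decide) (Ne.symm huv)
          (Ne.symm hxz) (Ne.symm hxv)
        exact C.no_flip b1 b2
    · rcases eq_or_ne z v with hzv | hzv
      · rcases eq_or_ne u x with hux | hux
        · subst hzv; subst hux
          obtain ⟨i, j, k, n1, n2, n3⟩ := hch5.1
          fin_cases i <;> fin_cases j <;> fin_cases k <;> simp_all
        · have b1 : C.btw z u x := hch5.2 0 1 4 (by decide) (by decide) hzu hux
            (Ne.symm hxz)
          have b2 : C.btw u v x := hch5.2 1 2 4 (by decide) (by decide) huv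
            (fun hh => hxz ((hzv.trans hh).symm)) hux
          exact C.no_flip b1 (hzv.symm ▸ b2)
      · have b1 : C.btw z u v := hch5.2 0 1 2 (by decide) (by decide) hzu huv hzv
        have b2 : C.btw z v u := hch5.2 0 2 3 (by decide) (by decide) hzv
          (Ne.symm huv) hzu
        exact C.no_both b1 b2
  by_cases hvz : v = z
  · exfalso
    have huz : u ≠ z := fun h => huv (h.trans hvz.symm)
    have hwz : w ≠ z := fun h => hvw (hvz.trans h.symm)
    have b1 : C.btw u v w := hch5.2 1 2 3 (by decide) (by decide) huv hvw huw
    have b2 : C.btw z u w := hch5.2 0 1 3 (by decide) (by decide) huz.symm huw hwz.symm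
    exact C.no_flip b2 (hvz ▸ b1)
  by_cases hvx : v = x
  · exfalso
    have hwx : w ≠ x := fun h => hvw (hvx.trans h.symm)
    have hux : u ≠ x := fun h => huv (h.trans hvx.symm)
    have b1 : C.btw u v w := hch5.2 1 2 3 (by decide) (by decide) huv hvw huw
    have b2 : C.btw u w x := hch5.2 1 3 4 (by decide) (by decide) huw hwx hux
    exact C.no_both (hvx ▸ b1) b2
  by_cases hux : u = x
  · exfalso
    have hzu : z ≠ u := fun h => hxz (hux.symm.trans h.symm)
    have b1 : C.btw z u v := hch5.2 0 1 2 (by decide) (by decide) hzu huv (Ne.symm hvz)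
    have b2 : C.btw z v x := hch5.2 0 2 4 (by decide) (by decide) (Ne.symm hvz) hvx
      (Ne.symm hxz)
    exact C.no_both (hux ▸ b1) b2
  by_cases hwz : w = z
  · exfalso
    have hzu : z ≠ u := fun h => huw (h.symm.trans hwz.symm)
    have hwx' : w ≠ x := fun h => hxz (hwz.symm.trans h).symm
    have b1 : C.btw z u x := hch5.2 0 1 4 (by decide) (by decide) hzu hux (Ne.symm hxz)
    have b2 : C.btw u w x := hch5.2 1 3 4 (by decide) (by decide) huw hwx' hux
    exact C.no_flip b1 (hwz ▸ b2)
  -- now u ≠ v, v ≠ w, u ≠ w, v ≠ z, v ≠ x, u ≠ x, w ≠ z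
  have buvw : C.btw u v w := hch5.2 1 2 3 (by decide) (by decide) huv hvw huw
  have buvx : C.btw u v x := hch5.2 1 2 4 (by decide) (by decide) huv hvx hux
  have bzvx : C.btw z v x := hch5.2 0 2 4 (by decide) (by decide) (Ne.symm hvz) hvx
    (Ne.symm hxz)
  have bxzv : C.btw x z v := C.cyc2 bzvx
  have bxyv : C.btw x y v := C.btw_trans bxyz bxzv
  have byvx : C.btw y v x := C.cyclic bxyv
  have bvxy : C.btw v x y := C.cyclic byvx
  have buxy : C.btw u x y := by
    rcases eq_or_ne u z with huz | huz
    · rw [huz]; exact bzxy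
    · have bzux : C.btw z u x := hch5.2 0 1 4 (by decide) (by decide) (Ne.symm huz) hux
        (Ne.symm hxz)
      have bxzu : C.btw x z u := C.cyc2 bzux
      have t1 : C.btw x y u := C.btw_trans bxyz bxzu
      exact C.cyc2 t1
  have bxyu : C.btw x y u := C.cyclic buxy
  have hdxu : d x u ≤ d x z := by
    rcases eq_or_ne u z with huz | huz
    · exact le_of_eq (congrArg (d x) huz)
    · have bzux : C.btw z u x := hch5.2 0 1 4 (by decide) (by decide) (Ne.symm huz) hux
        (Ne.symm hxz)
      have bxzu : C.btw x z u := C.cyc2 bzux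
      have t2 : C.btw z u y := C.btw_trans bzux bzxy
      have byzu : C.btw y z u := C.cyc2 t2
      have hA := hc x y z u (C.mkChain4 bxyz bxyu bxzu byzu)
      have h2 := (min_le_iff.mp hA).resolve_left
        (not_le.mpr (lt_of_lt_of_le hlt (le_max_left _ _)))
      exact le_trans (le_max_left _ _) h2
  by_cases hwx : w = x
  · rw [hwx]
    have buvy : C.btw u v y := C.btw_trans buvx buxy
    have hD := hc u v x y (C.mkChain4 buvx buvy buxy bvxy)
    have hux_lt : d u x < max (d u y) (d y x) := by
      calc d u x = d x u := dsym u x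
        _ ≤ d x z := hdxu
        _ < d x y := hlt
        _ = d y x := dsym x y
        _ ≤ max (d u y) (d y x) := le_max_right _ _
    exact (min_le_iff.mp hD).resolve_right (not_le.mpr hux_lt)
  · have bzwx : C.btw z w x := hch5.2 0 3 4 (by decide) (by decide) (Ne.symm hwz) hwx
      (Ne.symm hxz)
    have buwx : C.btw u w x := hch5.2 1 3 4 (by decide) (by decide) huw hwx hux
    have bvwx : C.btw v w x := hch5.2 2 3 4 (by decide) (by decide) hvw hwx hvx
    have bxzw : C.btw x z w := C.cyc2 bzwx
    have bxyw : C.btw x y w := C.btw_trans bxyz bxzw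
    have bywx : C.btw y w x := C.cyclic bxyw
    have bwxy : C.btw w x y := C.cyclic bywx
    have bxuw : C.btw x u w := C.cyc2 buwx
    have t3 : C.btw u w y := C.btw_trans buwx buxy
    have byuw : C.btw y u w := C.cyc2 t3
    have buvy : C.btw u v y := C.btw_trans buvx buxy
    have buwy : C.btw u w y := C.btw_trans buwx buxy
    have bvwy : C.btw v w y := C.btw_trans bvwx bvxy
    have bwyv : C.btw w y v := C.cyclic bvwy
    have bwxv : C.btw w x v := C.cyclic bvwx
    have chB := hc x y u w (C.mkChain4 bxyu bxyw bxuw byuw)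
    have hB : max (d x w) (d w u) ≤ d x u :=
      (min_le_iff.mp chB).resolve_left (not_le.mpr (by
        calc d x u ≤ d x z := hdxu
          _ < d x y := hlt
          _ ≤ max (d x y) (d y u) := le_max_left _ _))
    have hduw_le : d u w ≤ d x z := by
      calc d u w = d w u := dsym u w
        _ ≤ d x u := le_trans (le_max_right _ _) hB
        _ ≤ d x z := hdxu
    by_contra hcon
    have hcon' : d u w < max (d u v) (d v w) := not_le.mp hcon
    have chC := hc u v w x (C.mkChain4 buvw buvx buwx bvwx)
    have hC : max (d u x) (d x w) ≤ d u w :=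
      (min_le_iff.mp chC).resolve_left (not_le.mpr hcon')
    have chD := hc u v x y (C.mkChain4 buvx buvy buxy bvxy)
    have hD : max (d u v) (d v x) ≤ d u x :=
      (min_le_iff.mp chD).resolve_right (not_le.mpr (by
        calc d u x = d x u := dsym u x
          _ ≤ d x z := hdxu
          _ < d x y := hlt
          _ = d y x := dsym x y
          _ ≤ max (d u y) (d y x) := le_max_right _ _))
    have chE := hc u v w y (C.mkChain4 buvw buvy buwy bvwy)
    have hE : max (d u y) (d y w) ≤ d u w :=
      (min_le_iff.mp chE).resolve_left (not_le.mpr hcon')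
    have chF := hc w x y v (C.mkChain4 bwxy bwxv bwyv bxyv)
    have hF : max (d w v) (d v y) ≤ d w y :=
      (min_le_iff.mp chF).resolve_left (not_le.mpr (by
        calc d w y = d y w := dsym w y
          _ ≤ d u w := le_trans (le_max_right _ _) hE
          _ ≤ d x z := hduw_le
          _ < d x y := hlt
          _ ≤ max (d w x) (d x y) := le_max_right _ _))
    apply hcon
    apply max_le
    · calc d u v ≤ max (d u v) (d v x) := le_max_left _ _
        _ ≤ d u x := hD
        _ ≤ max (d u x) (d x w) := le_max_left _ _
        _ ≤ d u w := hC
    · calc d v w = d w v := dsym v w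
        _ ≤ max (d w v) (d v y) := le_max_left _ _
        _ ≤ d w y := hF
        _ = d y w := dsym w y
        _ ≤ d u w := le_trans (le_max_right _ _) hE

end Aux

set_option maxHeartbeats 1000000 in
theorem stmt7 {X : Type*} [Fintype X] (d : X → X → ℝ) (hd : Dissim d)
    (C : CircOrder X) (hc : preCompat C d) (x y z : X)
    (hch : C.Chain ![x, y, z]) (hlt : d x z < max (d x y) (d y z)) :
    RobinsonOnArc C d z x := by
  have hsym := hd.1
  have hxy : x ≠ y := by
    intro h; subst h
    obtain ⟨i, j, k, n1, n2, n3⟩ := hch.1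
    fin_cases i <;> fin_cases j <;> fin_cases k <;> simp_all
  have hyz : y ≠ z := by
    intro h; subst h
    obtain ⟨i, j, k, n1, n2, n3⟩ := hch.1
    fin_cases i <;> fin_cases j <;> fin_cases k <;> simp_all
  have hxz : x ≠ z := by
    intro h; subst h
    obtain ⟨i, j, k, n1, n2, n3⟩ := hch.1
    fin_cases i <;> fin_cases j <;> fin_cases k <;> simp_all
  have bxyz : C.btw x y z := hch.2 0 1 2 (by decide) (by decide) hxy hyz hxz
  rcases lt_max_iff.mp hlt with h | h
  · exact arc_aux d hd C hc x y z bxyz h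
  · have hc' : preCompat C.rev d := preCompat_rev hsym hc
    have key : RobinsonOnArc C.rev d x z :=
      arc_aux d hd C.rev hc' z y x bxyz (by rw [hsym z x, hsym z y]; exact h)
    intro u v w hch5
    have h5 : C.rev.Chain ![x, w, v, u, z] := by
      have h0 := hch5.rev'
      have hfe : (fun i : Fin 5 => (![z,u,v,w,x] : Fin 5 → X) i.rev) = ![x,w,v,u,z] := by
        funext i; fin_cases i <;> rfl
      rwa [hfe] at h0
    have hk := key w v u h5
    rw [hsym u v, hsym v w, hsym u w, max_comm]
    exact hk
end

section
/- Let (X,d) be a strictly circular Robinson space with compatible circular order β. Then for all x, y ∈ X, x' ∈ F_x, y' ∈ F_y with |{x, x', y, y'}| ≥ 3, either x ⋖ y ⋖ x' ⋖ y' or x ⋖ y' ⋖ x' ⋖ y holds. -/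
section helpers
variable {X : Type*} (C : CircOrder X)

lemma chain4_mk {a b c e : X}
    (hex : ∃ i j k : Fin 4, ![a,b,c,e] i ≠ ![a,b,c,e] j ∧ ![a,b,c,e] j ≠ ![a,b,c,e] k ∧ ![a,b,c,e] i ≠ ![a,b,c,e] k)
    (h012 : a ≠ b → b ≠ c → a ≠ c → C.btw a b c)
    (h013 : a ≠ b → b ≠ e → a ≠ e → C.btw a b e)
    (h023 : a ≠ c → c ≠ e → a ≠ e → C.btw a c e)
    (h123 : b ≠ c → c ≠ e → b ≠ e → C.btw b c e) :
    C.Chain ![a,b,c,e] := by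
  refine ⟨hex, ?_⟩
  clear hex
  intro i j k hij hjk h1 h2 h3
  fin_cases i <;> fin_cases j <;> fin_cases k <;>
    first
    | exact absurd hij (by decide)
    | exact absurd hjk (by decide)
    | (simp only [Matrix.cons_val_zero, Matrix.cons_val_one, Matrix.head_cons,
        Matrix.cons_val_two, Matrix.tail_cons, Matrix.cons_val_three, Matrix.cons_val_fin_one] at h1 h2 h3 ⊢
       first | exact h012 h1 h2 h3 | exact h013 h1 h2 h3 | exact h023 h1 h2 h3 | exact h123 h1 h2 h3)

lemma btw_last {a b c e : X} (h1 : C.btw a b c) (h2 : C.btw a c e) : C.btw b c e := by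
  have hc1 : C.btw c a b := C.cyclic (C.cyclic h1)
  have hc2 : C.btw c e a := C.cyclic h2
  have h3 : C.btw c e b := C.btw_trans hc2 hc1
  exact C.cyclic (C.cyclic h3)

lemma chain4_of {a b c e : X} (h1 : C.btw a b c) (h2 : C.btw a c e) : C.Chain ![a,b,c,e] := by
  obtain ⟨hab, hbc, hac⟩ := C.distinct h1
  exact chain4_mk C ⟨0, 1, 2, by simpa using ⟨hab, hbc, hac⟩⟩
    (fun _ _ _ => h1) (fun _ _ _ => C.btw_trans h1 h2) (fun _ _ _ => h2)
    (fun _ _ _ => btw_last C h1 h2)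

lemma chain4_aace {a c e : X} (h : C.btw a c e) : C.Chain ![a,a,c,e] := by
  obtain ⟨hac, hce, hae⟩ := C.distinct h
  exact chain4_mk C ⟨0, 2, 3, by simpa using ⟨hac, hce, hae⟩⟩
    (fun h' _ _ => absurd rfl h') (fun h' _ _ => absurd rfl h')
    (fun _ _ _ => h) (fun _ _ _ => h)

lemma chain4_abca {a b c : X} (h : C.btw a b c) : C.Chain ![a,b,c,a] := by
  obtain ⟨hab, hbc, hac⟩ := C.distinct h
  exact chain4_mk C ⟨0, 1, 2, by simpa using ⟨hab, hbc, hac⟩⟩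
    (fun _ _ _ => h) (fun _ _ h' => absurd rfl h')
    (fun _ _ h' => absurd rfl h') (fun _ _ _ => C.cyclic h)

lemma chain4_abbe {a b e : X} (h : C.btw a b e) : C.Chain ![a,b,b,e] := by
  obtain ⟨hab, hbe, hae⟩ := C.distinct h
  exact chain4_mk C ⟨0, 1, 3, by simpa using ⟨hab, hbe, hae⟩⟩
    (fun _ h' _ => absurd rfl h') (fun _ _ _ => h)
    (fun _ _ _ => h) (fun h' _ _ => absurd rfl h')

lemma chain4_abcc {a b c : X} (h : C.btw a b c) : C.Chain ![a,b,c,c] := by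
  obtain ⟨hab, hbc, hac⟩ := C.distinct h
  exact chain4_mk C ⟨0, 1, 2, by simpa using ⟨hab, hbc, hac⟩⟩
    (fun _ _ _ => h) (fun _ _ _ => h)
    (fun _ h' _ => absurd rfl h') (fun _ h' _ => absurd rfl h')

lemma pw4 {a b c e : X} (h1 : a≠b) (h2 : a≠c) (h3 : a≠e) (h4 : b≠c) (h5 : b≠e) (h6 : c≠e) :
    List.Pairwise (· ≠ ·) [a,b,c,e] := by
  simp only [List.pairwise_cons, List.mem_cons, List.mem_singleton, List.not_mem_nil]
  refine ⟨?_, ?_, ⟨?_, by simp, List.Pairwise.nil⟩⟩ <;> rintro z (rfl|rfl|rfl|h) <;>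
    first | assumption | simp_all

end helpers
theorem stmt13 {X : Type*} [Fintype X] (d : X → X → ℝ) (hd : Dissim d)
    (C : CircOrder X) (hc : spreCompat C d) (x y x' y' : X)
    (hx' : x' ∈ Fset d x) (hy' : y' ∈ Fset d y)
    (hcard : 3 ≤ Set.ncard {x, x', y, y'}) :
    C.Chain ![x, y, x', y'] ∨ C.Chain ![x, y', x', y] := by
  have hFx : ∀ z, d x z ≤ d x x' := hx'
  have hFy : ∀ z, d y z ≤ d y y' := hy'
  have two : ∀ s t : X, ¬ (({x, x', y, y'} : Set X) ⊆ {s, t}) := by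
    intro s t hsub
    have h1 : ({x, x', y, y'} : Set X).ncard ≤ ({s, t} : Set X).ncard :=
      Set.ncard_le_ncard hsub (Set.toFinite _)
    have h2 : ({s, t} : Set X).ncard ≤ 2 := by
      refine le_trans (Set.ncard_insert_le _ _) ?_
      simp
    omega
  have hxx' : x ≠ x' := by
    intro h
    have hz : ∀ z : X, z = x := by
      intro z
      have h0 : d x x' = 0 := by rw [← h]; exact (hd.2.2 x x).mpr rfl
      have h1 : d x z = 0 := le_antisymm (h0 ▸ hFx z) (hd.2.1 x z)
      exact ((hd.2.2 x z).mp h1).symm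
    exact two x x (by intro z _; simp [hz z])
  have hyy' : y ≠ y' := by
    intro h
    have hz : ∀ z : X, z = y := by
      intro z
      have h0 : d y y' = 0 := by rw [← h]; exact (hd.2.2 y y).mpr rfl
      have h1 : d y z = 0 := le_antisymm (h0 ▸ hFy z) (hd.2.1 y z)
      exact ((hd.2.2 y z).mp h1).symm
    exact two y y (by intro z _; simp [hz z])
  by_cases hxy : x = y
  · subst hxy
    have h1 : x ≠ y' := by
      intro h; subst h; exact two x x' (by intro z hz; simp at hz ⊢; tauto)
    have h2 : x' ≠ y' := by
      intro h; subst h; exact two x x' (by intro z hz; simp at hz ⊢; tauto)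
    rcases C.total hxx' h2 h1 with h | h
    · exact Or.inl (chain4_aace C h)
    · exact Or.inr (chain4_abca C (C.cyclic (C.cyclic h)))
  by_cases hxy' : x = y'
  · subst hxy'
    have h1 : x ≠ y := by
      intro h; subst h; exact two x x' (by intro z hz; simp at hz ⊢; tauto)
    have h2 : x' ≠ y := by
      intro h; subst h; exact two x x' (by intro z hz; simp at hz ⊢; tauto)
    rcases C.total h1 (Ne.symm h2) hxx' with h | h
    · exact Or.inl (chain4_abca C h)
    · exact Or.inr (chain4_aace C (C.cyclic (C.cyclic h)))
  by_cases hx'y : x' = y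
  · subst hx'y
    have h1 : x ≠ y' := by
      intro h; subst h; exact two x x' (by intro z hz; simp at hz ⊢; tauto)
    have h2 : x' ≠ y' := by
      intro h; subst h; exact two x x (by intro z hz; simp at hz ⊢; tauto)
    rcases C.total hxx' h2 h1 with h | h
    · exact Or.inl (chain4_abbe C h)
    · exact Or.inr (chain4_abcc C (C.cyclic (C.cyclic h)))
  by_cases hx'y' : x' = y'
  · subst hx'y'
    have h1 : x ≠ y := by
      intro h; subst h; exact two x x' (by intro z hz; simp at hz ⊢; tauto)
    have h2 : x' ≠ y := by
      intro h; subst h; exact two x x' (by intro z hz; simp at hz ⊢; tauto)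
    rcases C.total h1 (Ne.symm h2) hxx' with h | h
    · exact Or.inl (chain4_abcc C h)
    · exact Or.inr (chain4_abbe C (C.cyclic (C.cyclic h)))
  -- main case: all four distinct
  rcases C.total hxy (Ne.symm hx'y) hxx' with hy1 | hy1
  · rcases C.total hxy' (Ne.symm hx'y') hxx' with hy2 | hy2
    · -- Case C: btw x y x' and btw x y' x'
      exfalso
      rcases C.total hxy hyy' hxy' with h3 | h3
      · -- C1: chain x ⋖ y ⋖ y' ⋖ x'
        have ch1 : C.Chain ![x, y, y', x'] := chain4_of C h3 hy2
        have ch2 : C.Chain ![y, y', x', x] :=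
          chain4_of C (btw_last C h3 hy2) (C.cyclic hy1)
        have scR1 := hc x y y' x'
          (pw4 hxy hxy' hxx' hyy' (Ne.symm hx'y) (Ne.symm hx'y')) ch1
        have scR2 := hc y y' x' x
          (pw4 hyy' (Ne.symm hx'y) (Ne.symm hxy) (Ne.symm hx'y') (Ne.symm hxy') (Ne.symm hxx')) ch2
        have e1 : d y y' < d x y' := by
          rcases min_lt_iff.mp scR1 with h | h
          · exact (max_lt_iff.mp h).2
          · exact absurd (max_lt_iff.mp h).1 (not_lt.mpr (hFx y'))
        have e2 : d x x' < d y x' := by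
          rcases min_lt_iff.mp scR2 with h | h
          · exact absurd (max_lt_iff.mp h).1 (not_lt.mpr (hFy x'))
          · exact (max_lt_iff.mp h).2
        linarith [hFx y', hFy x']
      · -- C2: chain x ⋖ y' ⋖ y ⋖ x', rotate to y ⋖ x' ⋖ x ⋖ y'
        have h3' : C.btw x y' y := C.cyclic (C.cyclic h3)
        have ch : C.Chain ![y, x', x, y'] :=
          chain4_of C (C.cyclic hy1) (C.cyclic (C.cyclic h3'))
        have scR := hc y x' x y'
          (pw4 (Ne.symm hx'y) (Ne.symm hxy) hyy' (Ne.symm hxx') hx'y' hxy') ch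
        rcases min_lt_iff.mp scR with h | h
        · have := (max_lt_iff.mp h).2
          have := hFx y
          have := hd.1 x' x
          have := hd.1 y x
          linarith
        · exact absurd (max_lt_iff.mp h).1 (not_lt.mpr (hFy x))
    · -- Case A: btw x y x' and btw x' y' x → left
      exact Or.inl (chain4_of C hy1 (C.cyclic (C.cyclic hy2)))
  · rcases C.total hxy' (Ne.symm hx'y') hxx' with hy2 | hy2
    · -- Case B: btw x' y x and btw x y' x' → right
      exact Or.inr (chain4_of C hy2 (C.cyclic (C.cyclic hy1)))
    · -- Case D: btw x' y x and btw x' y' x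
      exfalso
      rcases C.total hx'y hyy' hx'y' with h3 | h3
      · -- D1: chain x' ⋖ y ⋖ y' ⋖ x
        have ch : C.Chain ![y, y', x, x'] :=
          chain4_of C (btw_last C h3 hy2) (C.cyclic hy1)
        have scR := hc y y' x x'
          (pw4 hyy' (Ne.symm hxy) (Ne.symm hx'y) (Ne.symm hxy') (Ne.symm hx'y') hxx') ch
        rcases min_lt_iff.mp scR with h | h
        · exact absurd (max_lt_iff.mp h).1 (not_lt.mpr (hFy x))
        · have := (max_lt_iff.mp h).2
          have := hFx y
          have := hd.1 x' x
          have := hd.1 y x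
          linarith
      · -- D2: chain x' ⋖ y' ⋖ y ⋖ x
        have h3' : C.btw x' y' y := C.cyclic (C.cyclic h3)
        have ch2 : C.Chain ![y, x, x', y'] :=
          chain4_of C (C.cyclic hy1) (C.cyclic (C.cyclic h3'))
        have ch3 : C.Chain ![x, x', y', y] :=
          chain4_of C (C.cyclic (C.cyclic (C.btw_trans h3' hy1)))
            (C.cyclic (C.cyclic (btw_last C h3' hy1)))
        have scRa := hc y x x' y'
          (pw4 (Ne.symm hxy) (Ne.symm hx'y) hyy' hxx' hxy' hx'y') ch2
        have scRb := hc x x' y' y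
          (pw4 hxx' hxy' hxy hx'y' hx'y (Ne.symm hyy')) ch3
        have e1 : d x x' < d y x' := by
          rcases min_lt_iff.mp scRa with h | h
          · exact (max_lt_iff.mp h).2
          · exact absurd (max_lt_iff.mp h).1 (not_lt.mpr (hFy x'))
        have e2 : d y y' < d x y' := by
          rcases min_lt_iff.mp scRb with h | h
          · exact absurd (max_lt_iff.mp h).1 (not_lt.mpr (hFx y'))
          · exact (max_lt_iff.mp h).2
        linarith [hFx y', hFy x']
end

section
/- Let (X,d) be a circular Robinson space with compatible circular order β. Then for all x, y ∈ X, x' ∈ F_x, y' ∈ F_y with |{x, x', y, y'}| ≥ 3, at least one of the following holds: (a) x ⋖ y ⋖ x' ⋖ y'; (b) x ⋖ y' ⋖ x' ⋖ y; (c) {y, y'} ∩ F_x ≠ ∅ or {x, x'} ∩ F_y ≠ ∅. -/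
section Helpers

variable {X : Type*} (C : CircOrder X)

private lemma btw_cyc2 {a b c : X} (h : C.btw a b c) : C.btw c a b := C.cyclic (C.cyclic h)

private lemma chain4 {a b c d : X} (h1 : C.btw a b c) (h2 : C.btw a b d)
    (h3 : C.btw a c d) (h4 : C.btw b c d) : C.Chain ![a,b,c,d] := by
  obtain ⟨hab, hbc, hac⟩ := C.distinct h1
  refine ⟨⟨0, 1, 2, by simpa using hab, by simpa using hbc, by simpa using hac⟩, ?_⟩
  intro i j k hij hjk _ _ _
  fin_cases i <;> fin_cases j <;> fin_cases k <;> simp_all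

private lemma chainInner {a b c d : X} (h1 : C.btw a b c) (h2 : C.btw a c d) :
    C.Chain ![a,b,c,d] :=
  chain4 C h1 (C.btw_trans h1 h2)
    h2 (btw_cyc2 C (C.btw_trans (C.cyclic h2) (btw_cyc2 C h1)))

private lemma chainOuter {a b c d : X} (h2 : C.btw a b d) (h4 : C.btw b c d) :
    C.Chain ![a,b,c,d] :=
  chain4 C (btw_cyc2 C (C.btw_trans h4 (C.cyclic h2))) h2
    (C.cyclic (C.btw_trans (btw_cyc2 C h2) (btw_cyc2 C h4))) h4

private lemma place {a b c p : X} (h : C.btw a b c) (hpa : p ≠ a) (hpb : p ≠ b) (hpc : p ≠ c) :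
    C.btw a p b ∨ C.btw b p c ∨ C.btw c p a := by
  obtain ⟨hab, hbc, hac⟩ := C.distinct h
  rcases C.total (Ne.symm hpa) hpb hab with h1 | h1
  · exact Or.inl h1
  rcases C.total (Ne.symm hpb) hpc hbc with h2 | h2
  · exact Or.inr (Or.inl h2)
  -- h1 : btw b p a, h2 : btw c p b
  have hpab : C.btw p a b := C.cyclic h1
  have hpbc : C.btw p b c := C.cyclic h2
  have : C.btw p a c := C.btw_trans hpab hpbc
  exact Or.inr (Or.inr (btw_cyc2 C this))

end Helpers

theorem stmt14 {X : Type*} [Fintype X] (d : X → X → ℝ) (hd : Dissim d)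
    (C : CircOrder X) (hc : preCompat C d) (x y x' y' : X)
    (hx' : x' ∈ Fset d x) (hy' : y' ∈ Fset d y)
    (hcard : 3 ≤ Set.ncard {x, x', y, y'}) :
    C.Chain ![x, y, x', y'] ∨ C.Chain ![x, y', x', y] ∨
      (({y, y'} : Set X) ∩ Fset d x).Nonempty ∨
      (({x, x'} : Set X) ∩ Fset d y).Nonempty := by
  classical
  obtain ⟨hsymm, hnn, hzero⟩ := hd
  have hx'' : ∀ z, d x z ≤ d x x' := hx'
  have hy'' : ∀ z, d y z ≤ d y y' := hy'
  -- degenerate cases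
  by_cases hxy : x = y
  · subst hxy
    exact Or.inr (Or.inr (Or.inr ⟨x', Set.mem_inter (by simp) hx'⟩))
  by_cases hxx' : x = x'
  · exfalso
    have h0 : d x x' = 0 := by rw [← hxx']; exact (hzero x x).mpr rfl
    have : d x y = 0 := le_antisymm (h0 ▸ hx'' y) (hnn x y)
    exact hxy ((hzero x y).mp this)
  by_cases hyy' : y = y'
  · exfalso
    have h0 : d y y' = 0 := by rw [← hyy']; exact (hzero y y).mpr rfl
    have : d y x = 0 := le_antisymm (h0 ▸ hy'' x) (hnn y x)
    exact hxy ((hzero y x).mp this).symm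
  by_cases hx'y : x' = y
  · exact Or.inr (Or.inr (Or.inl ⟨y, Set.mem_inter (by simp) (hx'y ▸ hx')⟩))
  by_cases hxy' : x = y'
  · exact Or.inr (Or.inr (Or.inr ⟨x, Set.mem_inter (by simp) (hxy' ▸ hy')⟩))
  by_cases hx'y' : x' = y'
  · exact Or.inr (Or.inr (Or.inl ⟨y', Set.mem_inter (by simp) (hx'y' ▸ hx')⟩))
  -- all four points are distinct
  have hyx' : y ≠ x' := fun h => hx'y h.symm
  rcases C.total hxy hyx' hxx' with t1 | t1
  · -- btw x y x'
    have hy'x : y' ≠ x := fun h => hxy' h.symm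
    have hy'y : y' ≠ y := fun h => hyy' h.symm
    have hy'x' : y' ≠ x' := fun h => hx'y' h.symm
    rcases place C t1 hy'x hy'y hy'x' with p | p | p
    · -- btw x y' y : order (x, y', y, x')
      have ch : C.Chain ![x, y', y, x'] := chainInner C p t1
      have key := hc x y' y x' ch
      rcases min_le_iff.mp key with h | h
      · obtain ⟨_, h2⟩ := max_le_iff.mp h
        -- d y' y ≤ d x y ⟹ x ∈ F_y
        have hle : d y y' ≤ d y x := by
          rw [hsymm y y', hsymm y x]; exact h2
        exact Or.inr (Or.inr (Or.inr ⟨x, Set.mem_inter (by simp)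
          (fun z => (hy'' z).trans hle)⟩))
      · obtain ⟨h1, _⟩ := max_le_iff.mp h
        -- d x x' ≤ d x y ⟹ y ∈ F_x
        exact Or.inr (Or.inr (Or.inl ⟨y, Set.mem_inter (by simp)
          (fun z => (hx'' z).trans h1)⟩))
    · -- btw y y' x' : order (x, y, y', x')
      have b2 : C.btw x y x' := t1
      have b4 : C.btw y y' x' := p
      have b1 : C.btw x y y' := btw_cyc2 C (C.btw_trans b4 (C.cyclic b2))
      have b3 : C.btw x y' x' := C.cyclic (C.btw_trans (btw_cyc2 C b2) (btw_cyc2 C b4))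
      have ch1 : C.Chain ![y', x', x, y] :=
        chain4 C (C.cyclic b3) (C.cyclic b4) (btw_cyc2 C b1) (btw_cyc2 C b2)
      have ch2 : C.Chain ![y, y', x', x] :=
        chain4 C b4 (C.cyclic b1) (C.cyclic b2) (C.cyclic b3)
      have key1 := hc y' x' x y ch1
      have key2 := hc y y' x' x ch2
      rcases min_le_iff.mp key1 with h | h
      · obtain ⟨_, h2⟩ := max_le_iff.mp h
        -- d x' x ≤ d y' x ⟹ y' ∈ F_x
        have hle : d x x' ≤ d x y' := by
          rw [hsymm x x', hsymm x y']; exact h2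
        exact Or.inr (Or.inr (Or.inl ⟨y', Set.mem_inter (by simp)
          (fun z => (hx'' z).trans hle)⟩))
      · obtain ⟨h1, _⟩ := max_le_iff.mp h
        -- h1 : d y' y ≤ d y' x
        rcases min_le_iff.mp key2 with h' | h'
        · obtain ⟨h1', _⟩ := max_le_iff.mp h'
          -- d y y' ≤ d y x' ⟹ x' ∈ F_y
          exact Or.inr (Or.inr (Or.inr ⟨x', Set.mem_inter (by simp)
            (fun z => (hy'' z).trans h1')⟩))
        · obtain ⟨_, h2'⟩ := max_le_iff.mp h'
          -- h2' : d x x' ≤ d y x'. chain: d x x' ≤ d y x' ≤ d y y' ≤ d x y'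
          have hle : d x x' ≤ d x y' := by
            have e1 : d y' y = d y y' := hsymm y' y
            have e2 : d y' x = d x y' := hsymm y' x
            have := hy'' x'
            linarith
          exact Or.inr (Or.inr (Or.inl ⟨y', Set.mem_inter (by simp)
            (fun z => (hx'' z).trans hle)⟩))
    · -- btw x' y' x : order (x, y, x', y') : disjunct (a)
      exact Or.inl (chainInner C t1 (btw_cyc2 C p))
  · -- btw x' y x, i.e. btw x x' y
    have t1' : C.btw x x' y := btw_cyc2 C t1
    have hy'x : y' ≠ x := fun h => hxy' h.symm
    have hy'y : y' ≠ y := fun h => hyy' h.symm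
    have hy'x' : y' ≠ x' := fun h => hx'y' h.symm
    rcases place C t1' hy'x hy'x' hy'y with p | p | p
    · -- btw x y' x' : order (x, y', x', y) : disjunct (b)
      exact Or.inr (Or.inl (chainInner C p t1'))
    · -- btw x' y' y : order (x, x', y', y)
      have c2 : C.btw x x' y := t1'
      have c4 : C.btw x' y' y := p
      have c1 : C.btw x x' y' := btw_cyc2 C (C.btw_trans c4 (C.cyclic c2))
      have c3 : C.btw x y' y := C.cyclic (C.btw_trans (btw_cyc2 C c2) (btw_cyc2 C c4))
      have chM : C.Chain ![x, x', y', y] := chain4 C c1 c2 c3 c4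
      have chR : C.Chain ![y, x, x', y'] :=
        chain4 C (btw_cyc2 C c2) (btw_cyc2 C c3) (btw_cyc2 C c4) c1
      have key1 := hc x x' y' y chM
      have key2 := hc y x x' y' chR
      rcases min_le_iff.mp key1 with h | h
      · obtain ⟨h1, _⟩ := max_le_iff.mp h
        -- d x x' ≤ d x y' ⟹ y' ∈ F_x
        exact Or.inr (Or.inr (Or.inl ⟨y', Set.mem_inter (by simp)
          (fun z => (hx'' z).trans h1)⟩))
      · obtain ⟨_, h2⟩ := max_le_iff.mp h
        -- h2 : d y y' ≤ d x y'
        rcases min_le_iff.mp key2 with h' | h'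
        · obtain ⟨_, h2'⟩ := max_le_iff.mp h'
          -- d x x' ≤ d y x' ; chain: d x x' ≤ d y x' ≤ d y y' ≤ d x y'
          have hle : d x x' ≤ d x y' := by
            have := hy'' x'
            linarith
          exact Or.inr (Or.inr (Or.inl ⟨y', Set.mem_inter (by simp)
            (fun z => (hx'' z).trans hle)⟩))
        · obtain ⟨h1', _⟩ := max_le_iff.mp h'
          -- d y y' ≤ d y x' ⟹ x' ∈ F_y
          exact Or.inr (Or.inr (Or.inr ⟨x', Set.mem_inter (by simp)
            (fun z => (hy'' z).trans h1')⟩))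
    · -- btw y y' x : order (x, x', y, y')
      have ch : C.Chain ![x, x', y, y'] := chainInner C t1' (btw_cyc2 C p)
      have key := hc x x' y y' ch
      rcases min_le_iff.mp key with h | h
      · obtain ⟨h1, _⟩ := max_le_iff.mp h
        exact Or.inr (Or.inr (Or.inl ⟨y, Set.mem_inter (by simp)
          (fun z => (hx'' z).trans h1)⟩))
      · obtain ⟨_, h2⟩ := max_le_iff.mp h
        have hle : d y y' ≤ d y x := by
          rw [hsymm y y', hsymm y x]; exact h2
        exact Or.inr (Or.inr (Or.inr ⟨x, Set.mem_inter (by simp)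
          (fun z => (hy'' z).trans hle)⟩))
end
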